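/- Let λ > 0, let σ be a real p×p matrix with σσᵀ invertible, set R := λ(σσᵀ)⁻¹, let B be a real n×p matrix, let V : ℝⁿ → ℝ be twice differentiable at x, let Z := exp(−V/λ), and set u* := −R⁻¹Bᵀ∇V(x). Then λ²·∇Z(x)ᵀBR⁻¹Bᵀ∇Z(x) = λ·tr(BσσᵀBᵀ·∇Z(x)∇Z(x)ᵀ), and consequently the quadratic terms cancel: (Bu*)ᵀ∇V(x) + (1/2)(u*)ᵀRu* + (1/2)tr(BσσᵀBᵀ·Hess V(x)) = −(λ/(2Z(x)))·tr(BσσᵀBᵀ·Hess Z(x)). -/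

import Mathlib

open Matrix

/-- The gradient of `V : ℝⁿ → ℝ` at `x`, as the vector of partial derivatives. -/
noncomputable def gradv {n : ℕ} (V : (Fin n → ℝ) → ℝ) (x : Fin n → ℝ) : Fin n → ℝ :=
  fun i => fderiv ℝ V x (Pi.single i 1)

/-- The Hessian of `V : ℝⁿ → ℝ` at `x`, as the matrix of second partial derivatives. -/
noncomputable def hessm {n : ℕ} (V : (Fin n → ℝ) → ℝ) (x : Fin n → ℝ) :
    Matrix (Fin n) (Fin n) ℝ :=
  Matrix.of fun i j => fderiv ℝ (fun y => fderiv ℝ V y (Pi.single j 1)) x (Pi.single i 1)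

/-! Since `R⁻¹ = λ⁻¹ σσᵀ`, the matrix `B R⁻¹ Bᵀ` equals `λ⁻¹ BσσᵀBᵀ`; this is the first identity,
and it shows that the Hamiltonian `(Bu)ᵀ∇V + ½ uᵀRu`, evaluated at its minimiser `u*`, equals
`-(1/2λ) ∇Vᵀ BσσᵀBᵀ ∇V`. On the other side, the chain rule for `Z = exp(-V/λ)` gives
`Hess Z = (Z/λ²) ∇V∇Vᵀ - (Z/λ) Hess V`, so `-(λ/2Z) tr(BσσᵀBᵀ Hess Z)` is the same quadratic term
plus `½ tr(BσσᵀBᵀ Hess V)`. -/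

section
variable {K : Type*} [Field K] {m : Type*} [Fintype m]

theorem Matrix.inv_smul_nonsing_inv [DecidableEq m] {c : K} (hc : c ≠ 0) {M : Matrix m m K}
    (hM : IsUnit M.det) : (c • M⁻¹)⁻¹ = c⁻¹ • M := by
  have : Invertible c := invertibleOfNonzero hc
  rw [inv_smul M⁻¹ c (isUnit_nonsing_inv_det M hM), invOf_eq_inv, nonsing_inv_nonsing_inv M hM]

theorem Matrix.trace_mul_vecMulVec_self (M : Matrix m m K) (v : m → K) :
    (M * vecMulVec v v).trace = v ⬝ᵥ (M *ᵥ v) := by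
  rw [mul_vecMulVec, trace_vecMulVec, dotProduct_comm]
end

section
variable {n : ℕ} {V : (Fin n → ℝ) → ℝ} {x : Fin n → ℝ}

theorem fderiv_comp_eq_smul {φ : ℝ → ℝ} {φ' : ℝ} (hφ : HasDerivAt φ φ' (V x))
    (hV : DifferentiableAt ℝ V x) : fderiv ℝ (φ ∘ V) x = φ' • fderiv ℝ V x :=
  (hφ.comp_hasFDerivAt x hV.hasFDerivAt).fderiv

theorem hessm_comp {φ φ' : ℝ → ℝ} {φ'' : ℝ} (hφ : ∀ t, HasDerivAt φ (φ' t) t)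
    (hφ' : HasDerivAt φ' φ'' (V x)) (hV1 : ∀ᶠ y in nhds x, DifferentiableAt ℝ V y)
    (hV2 : DifferentiableAt ℝ (fderiv ℝ V) x) :
    hessm (φ ∘ V) x = φ'' • vecMulVec (gradv V x) (gradv V x) + φ' (V x) • hessm V x := by
  ext i j
  have hpartial : (fun y => fderiv ℝ (φ ∘ V) y (Pi.single j 1))
      =ᶠ[nhds x] fun y => φ' (V y) * fderiv ℝ V y (Pi.single j 1) := by
    filter_upwards [hV1] with y hy
    simp [fderiv_comp_eq_smul (hφ (V y)) hy]
  have hφ'V : HasFDerivAt (fun y => φ' (V y)) (φ'' • fderiv ℝ V x) x :=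
    hφ'.comp_hasFDerivAt x (hV1.self_of_nhds.hasFDerivAt)
  have hVj : DifferentiableAt ℝ (fun y => fderiv ℝ V y (Pi.single j 1)) x :=
    (ContinuousLinearMap.apply ℝ ℝ (Pi.single j 1 : Fin n → ℝ)).differentiableAt.comp x hV2
  simp only [hessm, of_apply, hpartial.fderiv_eq, fderiv_fun_mul hφ'V.differentiableAt hVj,
    hφ'V.fderiv]
  simp only [Matrix.add_apply, Matrix.smul_apply, vecMulVec_apply, gradv, of_apply, smul_eq_mul,
    _root_.add_apply, FunLike.coe_smul, Pi.smul_apply]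
  ring
end

theorem control_hamiltonian_at_minimizer {m p : Type*} [Fintype m] [Fintype p] [DecidableEq p]
    {R : Matrix p p ℝ} (hR : IsUnit R.det) (B : Matrix m p ℝ) (g : m → ℝ) {u : p → ℝ}
    (hu : u = -(R⁻¹ *ᵥ (Bᵀ *ᵥ g))) :
    (B *ᵥ u) ⬝ᵥ g + 1 / 2 * (u ⬝ᵥ (R *ᵥ u)) = -(1 / 2) * (g ⬝ᵥ ((B * R⁻¹ * Bᵀ) *ᵥ g)) := by
  have hRu : R *ᵥ u = -(Bᵀ *ᵥ g) := by
    rw [hu, mulVec_neg, mulVec_mulVec, mul_nonsing_inv R hR, one_mulVec]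
  have hcross : (B *ᵥ u) ⬝ᵥ g = u ⬝ᵥ (Bᵀ *ᵥ g) := by
    rw [dotProduct_comm, dotProduct_mulVec, mulVec_transpose, dotProduct_comm]
  have hquad : g ⬝ᵥ ((B * R⁻¹ * Bᵀ) *ᵥ g) = -(u ⬝ᵥ (Bᵀ *ᵥ g)) := by
    rw [hu, ← mulVec_mulVec, ← mulVec_mulVec, dotProduct_mulVec, ← mulVec_transpose,
      neg_dotProduct, neg_neg, dotProduct_comm]
  rw [hcross, hRu, hquad, dotProduct_neg]
  ring

theorem Real.hasDerivAt_exp_neg_div (c t : ℝ) :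
    HasDerivAt (fun s => Real.exp (-s / c)) (-Real.exp (-t / c) / c) t := by
  simpa [div_eq_mul_inv, mul_comm] using ((hasDerivAt_id t).neg.div_const c).exp

/-- Under the noise–control-cost compatibility condition `R = λ(σσᵀ)⁻¹`,
`λ²∇Z(x)ᵀBR⁻¹Bᵀ∇Z(x) = λ tr(BσσᵀBᵀ ∇Z(x)∇Z(x)ᵀ)`, and consequently the quadratic terms
of the HJB equation cancel:
`(Bu*)ᵀ∇V(x) + (1/2)(u*)ᵀRu* + (1/2)tr(BσσᵀBᵀ Hess V(x)) = −(λ/(2Z(x)))tr(BσσᵀBᵀ Hess Z(x))`. -/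
theorem quadratic_terms_cancel {n p : ℕ} (lam : ℝ) (hlam : 0 < lam)
    (sg : Matrix (Fin p) (Fin p) ℝ) (hsg : IsUnit (sg * sgᵀ).det)
    (R : Matrix (Fin p) (Fin p) ℝ) (hR : R = lam • (sg * sgᵀ)⁻¹)
    (B : Matrix (Fin n) (Fin p) ℝ)
    (V : (Fin n → ℝ) → ℝ) (x : Fin n → ℝ)
    (hV1 : ∀ᶠ y in nhds x, DifferentiableAt ℝ V y)
    (hV2 : DifferentiableAt ℝ (fderiv ℝ V) x)
    (Z : (Fin n → ℝ) → ℝ) (hZ : Z = fun y => Real.exp (-V y / lam))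
    (ustar : Fin p → ℝ) (hustar : ustar = -(R⁻¹ *ᵥ (Bᵀ *ᵥ gradv V x))) :
    lam ^ 2 * (gradv Z x ⬝ᵥ ((B * R⁻¹ * Bᵀ) *ᵥ gradv Z x)) =
      lam * ((B * sg * sgᵀ * Bᵀ) * vecMulVec (gradv Z x) (gradv Z x)).trace ∧
    ((B *ᵥ ustar) ⬝ᵥ gradv V x) + (1 / 2) * (ustar ⬝ᵥ (R *ᵥ ustar))
        + (1 / 2) * ((B * sg * sgᵀ * Bᵀ) * hessm V x).trace =
      -(lam / (2 * Z x)) * ((B * sg * sgᵀ * Bᵀ) * hessm Z x).trace := by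
  have hRinv : R⁻¹ = lam⁻¹ • (sg * sgᵀ) := by rw [hR, inv_smul_nonsing_inv hlam.ne' hsg]
  have hBRB : B * R⁻¹ * Bᵀ = lam⁻¹ • (B * sg * sgᵀ * Bᵀ) := by
    rw [hRinv, Matrix.mul_smul, Matrix.smul_mul, Matrix.mul_assoc B sg]
  have hRdet : IsUnit R.det := by
    rw [hR, det_smul]
    exact ((isUnit_iff_ne_zero.2 hlam.ne').pow _).mul (isUnit_nonsing_inv_det _ hsg)
  have hZφ : Z = (fun t => Real.exp (-t / lam)) ∘ V := hZ
  have hZx : Z x = Real.exp (-V x / lam) := by rw [hZ]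
  have hφ' : HasDerivAt (fun t => -Real.exp (-t / lam) / lam) (Z x / lam ^ 2) (V x) :=
    ((Real.hasDerivAt_exp_neg_div lam (V x)).neg.div_const lam).congr_deriv (by
      rw [hZx]; field_simp)
  constructor
  · rw [hBRB, trace_mul_vecMulVec_self, smul_mulVec, dotProduct_smul, smul_eq_mul]
    field_simp
  · rw [control_hamiltonian_at_minimizer hRdet B _ hustar, hBRB, hZφ,
      hessm_comp (Real.hasDerivAt_exp_neg_div lam) hφ' hV1 hV2, ← hZφ, Matrix.mul_add,
      trace_add, Matrix.mul_smul, Matrix.mul_smul, trace_smul, trace_smul,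
      trace_mul_vecMulVec_self, smul_mulVec, dotProduct_smul]
    simp only [smul_eq_mul, hZx]
    field_simp
    ring
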